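/- Let G be a chordal graph on n vertices with no isolated vertices. Then the noncover complex NC(G) is (n − iγ(G) − 1)-collapsible. -/

import Mathlib

/-
For a ground set `s` and marked vertices `B`, consider the complex of all `W ⊆ s` whose
complement `s \ W` is not an independent set avoiding `B`; `NC G` is the case `s = V`, `B = ∅`.
Collapsing the cone over a vertex `u` along a collapse of its link shows that a complex is
`(d+1)`-collapsible once its link at `u` is `d`-collapsible and its deletion of `u` is
`(d+1)`-collapsible. At a marked vertex the deletion is a simplex. Without marks, pick adjacent
`v, u` in `s` with `N[v] ⊆ N[u]` inside `s`: the link of `u` is the unmarked complex on `s - u`,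
the deletion is the complex on `s - u` with the neighbours of `u` marked, and maximal independent
sets of the new ground sets are (after adding `u` in the second case) maximal independent sets of
`s`. By induction on `|s|` the complex is `d`-collapsible whenever `|s| ≤ |M| + d + 1` for every
maximal independent set `M` of `G[s \ B]`; for `d = 0` it is a simplex or empty. In a chordal
graph the first two vertices of a longest chordless path form such a pair `v, u`, and a maximal
independent set of `G` dominates `V`, so `iγ(G) ≤ |M|`.
-/

variable {V : Type*} [Fintype V] [DecidableEq V]

open Finset


/-- `W` dominates the set `A` in `G`: every vertex of `A` is in `W` or adjacent to a vertex of `W`. -/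
def Dominates (G : SimpleGraph V) (W A : Finset V) : Prop :=
  ∀ a ∈ A, a ∈ W ∨ ∃ w ∈ W, G.Adj w a

/-- `I` is an independent set of `G`. -/
def IndepSet (G : SimpleGraph V) (I : Finset V) : Prop :=
  ∀ u ∈ I, ∀ v ∈ I, ¬ G.Adj u v

instance (G : SimpleGraph V) [DecidableRel G.Adj] (I : Finset V) :
    Decidable (IndepSet G I) := by unfold IndepSet; infer_instance

/-- The domination number of `G`. -/
noncomputable def gamma (G : SimpleGraph V) : ℕ :=
  sInf {k | ∃ W : Finset V, W.card = k ∧ Dominates G W Finset.univ}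

/-- The independence domination number of `G`. -/
noncomputable def igamma (G : SimpleGraph V) : ℕ :=
  sInf {k | ∀ I : Finset V, IndepSet G I → ∃ W : Finset V, W.card ≤ k ∧ Dominates G W I}

/-- The noncover complex of `G`: faces are the vertex sets whose complement is not independent. -/
def NC (G : SimpleGraph V) [DecidableRel G.Adj] : Finset (Finset V) :=
  Finset.univ.filter fun W => ¬ IndepSet G Wᶜ

/-- The independence complex of `G`. -/
def IndComplex (G : SimpleGraph V) [DecidableRel G.Adj] : Finset (Finset V) :=
  Finset.univ.filter fun I => IndepSet G I

/-- The combinatorial Alexander dual of a complex on the full vertex set `V`. -/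
def AlexDual (K : Finset (Finset V)) : Finset (Finset V) :=
  Finset.univ.filter fun s => sᶜ ∉ K

/-- `K` is a simplicial complex (downward closed family of finite sets). -/
def IsComplex (K : Finset (Finset V)) : Prop :=
  ∀ σ ∈ K, ∀ τ ⊆ σ, τ ∈ K

/-- `s` is a maximal face (facet) of `K`. -/
def IsMaxFace (K : Finset (Finset V)) (s : Finset V) : Prop :=
  s ∈ K ∧ ∀ t ∈ K, s ⊆ t → t = s

/-- `σ` is a free face of `K`: a face contained in a unique maximal face. -/
def IsFreeFace (K : Finset (Finset V)) (σ : Finset V) : Prop :=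
  σ ∈ K ∧ ∃ τ ∈ K, σ ⊆ τ ∧ ∀ ρ ∈ K, σ ⊆ ρ → ρ ⊆ τ

/-- `K'` is obtained from `K` by an elementary `d`-collapse. -/
def ElemCollapse (d : ℕ) (K K' : Finset (Finset V)) : Prop :=
  ∃ σ : Finset V, IsFreeFace K σ ∧ σ.card ≤ d ∧ K' = K.filter fun ρ => ¬ σ ⊆ ρ

/-- `K` is `d`-collapsible. -/
def Collapsible (d : ℕ) (K : Finset (Finset V)) : Prop :=
  Relation.ReflTransGen (ElemCollapse d) K ∅

/-- chordality -/
def IsChordal (G : SimpleGraph V) : Prop :=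
  ∀ (u : V) (c : G.Walk u u), c.IsCycle → 4 ≤ c.length →
    ∃ x ∈ c.support, ∃ y ∈ c.support, G.Adj x y ∧ s(x, y) ∉ c.edges

/-- simplicial vertex -/
def IsSimplicialVtx (G : SimpleGraph V) (v : V) : Prop :=
  ∀ x y : V, G.Adj v x → G.Adj v y → x ≠ y → G.Adj x y

section Collapse

variable {V : Type*} [DecidableEq V]

def link (K : Finset (Finset V)) (u : V) : Finset (Finset V) :=
  (K.filter (u ∈ ·)).image (·.erase u)

def deletion (K : Finset (Finset V)) (u : V) : Finset (Finset V) :=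
  K.filter (u ∉ ·)

theorem mem_link {K : Finset (Finset V)} {u : V} {F : Finset V} :
    F ∈ link K u ↔ u ∉ F ∧ insert u F ∈ K := by
  rw [link, mem_image]
  constructor
  · rintro ⟨W, hW, rfl⟩
    rw [mem_filter] at hW
    exact ⟨notMem_erase u W, by rw [insert_erase hW.2]; exact hW.1⟩
  · rintro ⟨huF, hF⟩
    exact ⟨insert u F, mem_filter.2 ⟨hF, mem_insert_self u F⟩, Finset.erase_insert huF⟩

theorem deletion_union_image_link (K : Finset (Finset V)) (u : V) :
    deletion K u ∪ (link K u).image (insert u) = K := by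
  have hcone : (link K u).image (insert u) = K.filter (u ∈ ·) := by
    rw [link, image_image]
    exact (image_congr fun W hW => insert_erase (mem_filter.1 hW).2).trans image_id
  rw [hcone, deletion, union_comm, filter_union_filter_not_eq]

theorem collapsible_powerset (d : ℕ) (t : Finset V) : Collapsible d t.powerset :=
  .single ⟨∅, ⟨empty_mem_powerset t, t, mem_powerset_self t, empty_subset t,
    fun _ hρ _ => mem_powerset.1 hρ⟩, by simp, by simp⟩

theorem ElemCollapse.subset {d : ℕ} {K K' : Finset (Finset V)} (h : ElemCollapse d K K') :
    K' ⊆ K := by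
  obtain ⟨σ, -, -, rfl⟩ := h
  exact filter_subset _ K

theorem ElemCollapse.union_image_insert {d : ℕ} {D L L' : Finset (Finset V)} {u : V}
    (hD : ∀ ρ ∈ D, u ∉ ρ) (hL : ∀ F ∈ L, u ∉ F) (h : ElemCollapse d L L') :
    ElemCollapse (d + 1) (D ∪ L.image (insert u)) (D ∪ L'.image (insert u)) := by
  obtain ⟨σ, ⟨hσ, τ, hτ, hστ, hmax⟩, hcard, rfl⟩ := h
  have huσ : u ∉ σ := hL σ hσ
  have hD' : ∀ ρ ∈ D, ¬ insert u σ ⊆ ρ := fun ρ hρ hsub =>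
    hD ρ hρ (hsub (mem_insert_self u σ))
  refine ⟨insert u σ, ⟨mem_union_right _ (mem_image_of_mem _ hσ), insert u τ,
    mem_union_right _ (mem_image_of_mem _ hτ), insert_subset_insert u hστ, ?_⟩, ?_, ?_⟩
  · intro ρ hρ hsub
    rcases mem_union.1 hρ with hρ | hρ
    · exact absurd hsub (hD' ρ hρ)
    · obtain ⟨F, hF, rfl⟩ := mem_image.1 hρ
      exact insert_subset_insert u (hmax F hF ((insert_subset_insert_iff huσ).1 hsub))
  · rw [card_insert_of_notMem huσ]
    omega
  · rw [filter_union, filter_true_of_mem hD', filter_image]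
    simp only [insert_subset_insert_iff huσ]

theorem Collapsible.reflTransGen_union_image_insert {d : ℕ} {D L : Finset (Finset V)} {u : V}
    (hD : ∀ ρ ∈ D, u ∉ ρ) (hL : ∀ F ∈ L, u ∉ F) (h : Collapsible d L) :
    Relation.ReflTransGen (ElemCollapse (d + 1)) (D ∪ L.image (insert u)) D := by
  induction h using Relation.ReflTransGen.head_induction_on with
  | refl => simpa using .refl
  | head hstep _ ih =>
    exact .head (hstep.union_image_insert hD hL) (ih fun F hF => hL F (hstep.subset hF))

theorem Collapsible.of_link_of_deletion {d : ℕ} {K : Finset (Finset V)} {u : V}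
    (hlk : Collapsible d (link K u)) (hdel : Collapsible (d + 1) (deletion K u)) :
    Collapsible (d + 1) K := by
  rw [← deletion_union_image_link K u]
  exact (hlk.reflTransGen_union_image_insert (fun ρ hρ => (mem_filter.1 hρ).2)
    fun F hF => (mem_link.1 hF).1).trans hdel

end Collapse

section Independence

variable {V : Type*} {G : SimpleGraph V}

theorem IndepSet.subset {I J : Finset V} (hJ : IndepSet G J) (h : I ⊆ J) : IndepSet G I :=
  fun u hu v hv => hJ u (h hu) v (h hv)

theorem indepSet_insert [DecidableEq V] {x : V} {I : Finset V} :
    IndepSet G (insert x I) ↔ IndepSet G I ∧ ∀ y ∈ I, ¬ G.Adj x y := by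
  simp only [IndepSet, forall_mem_insert, G.irrefl, not_false_eq_true, true_and]
  constructor
  · rintro ⟨hx, hI⟩
    exact ⟨fun u hu => (hI u hu).2, hx⟩
  · rintro ⟨hI, hx⟩
    exact ⟨hx, fun u hu => ⟨fun h => hx u hu h.symm, hI u hu⟩⟩

variable (G) in
/-- Equivalently, `M` is a maximal independent subset of `g`. -/
def IsIndepDominatingIn (g M : Finset V) : Prop :=
  M ⊆ g ∧ IndepSet G M ∧ Dominates G M g

theorem exists_isIndepDominatingIn_superset [DecidableEq V] {g I : Finset V} (hIg : I ⊆ g)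
    (hI : IndepSet G I) : ∃ M, I ⊆ M ∧ IsIndepDominatingIn G g M := by
  classical
  obtain ⟨M, hM, hmax⟩ := exists_max_image (g.powerset.filter fun J => I ⊆ J ∧ IndepSet G J)
    card ⟨I, by simp [hIg, hI]⟩
  simp only [mem_filter, mem_powerset] at hM hmax
  obtain ⟨hMg, hIM, hMind⟩ := hM
  refine ⟨M, hIM, hMg, hMind, fun a ha => ?_⟩
  by_contra! hdom
  have hins : IndepSet G (insert a M) :=
    indepSet_insert.2 ⟨hMind, fun y hy hay => hdom.2 y hy hay.symm⟩
  have := hmax _ ⟨insert_subset ha hMg, hIM.trans (subset_insert a M), hins⟩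
  rw [card_insert_of_notMem hdom.1] at this
  omega

theorem IsIndepDominatingIn.of_erase [DecidableEq V] {s M : Finset V} {u v : V}
    (hM : IsIndepDominatingIn G (s.erase u) M) (hv : v ∈ s) (hvu : G.Adj v u)
    (hdom : ∀ w ∈ s, G.Adj v w → w = u ∨ G.Adj u w) : IsIndepDominatingIn G s M := by
  obtain ⟨hMs, hMind, hMdom⟩ := hM
  refine ⟨hMs.trans (erase_subset u s), hMind, fun a ha => ?_⟩
  obtain rfl | hau := eq_or_ne a u
  · right
    rcases hMdom v (mem_erase.2 ⟨G.ne_of_adj hvu, hv⟩) with hvM | ⟨w, hwM, hwv⟩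
    · exact ⟨v, hvM, hvu⟩
    · have hwa : w ≠ a := fun h => (mem_erase.1 (hMs hwM)).1 h
      exact ⟨w, hwM, ((hdom w (mem_of_mem_erase (hMs hwM)) hwv.symm).resolve_left hwa).symm⟩
  · exact hMdom a (mem_erase.2 ⟨hau, ha⟩)

theorem IsIndepDominatingIn.insert [DecidableEq V] [DecidableRel G.Adj] {s M : Finset V} {u : V}
    (hu : u ∈ s)
    (hM : IsIndepDominatingIn G (s.erase u \ (s.erase u).filter (G.Adj u)) M) :
    IsIndepDominatingIn G s (insert u M) := by
  obtain ⟨hMs, hMind, hMdom⟩ := hM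
  have hMs' : ∀ y ∈ M, y ∈ s.erase u ∧ ¬ G.Adj u y := fun y hy => by
    have := hMs hy
    simp only [mem_sdiff, mem_filter] at this
    tauto
  refine ⟨insert_subset hu fun y hy => mem_of_mem_erase (hMs' y hy).1,
    indepSet_insert.2 ⟨hMind, fun y hy => (hMs' y hy).2⟩, fun a ha => ?_⟩
  obtain rfl | hau := eq_or_ne a u
  · exact .inl (mem_insert_self a M)
  by_cases hua : G.Adj u a
  · exact .inr ⟨u, mem_insert_self u M, hua⟩
  rcases hMdom a (by simp [hau, ha, hua]) with haM | ⟨w, hwM, hwa⟩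
  · exact .inl (mem_insert_of_mem haM)
  · exact .inr ⟨w, mem_insert_of_mem hwM, hwa⟩

theorem indepSet_erase_of_adj [DecidableEq V] {s : Finset V} {x y : V} (hx : x ∈ s) (hy : y ∈ s)
    (hxy : G.Adj x y) (hbound : ∀ M, IsIndepDominatingIn G s M → s.card ≤ M.card + 1) :
    IndepSet G (s.erase y) := by
  obtain ⟨M, hxM, hM⟩ := exists_isIndepDominatingIn_superset (singleton_subset_iff.2 hx)
    (fun u hu v hv => by rw [mem_singleton.1 hu, mem_singleton.1 hv]; exact G.irrefl)
  have hyM : y ∉ M := fun hyM => hM.2.1 x (hxM (mem_singleton_self x)) y hyM hxy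
  have hMeq : M = s.erase y := eq_of_subset_of_card_le (subset_erase.2 ⟨hM.1, hyM⟩) (by
    have := hbound M hM
    rw [card_erase_of_mem hy]
    omega)
  exact hMeq ▸ hM.2.1

theorem igamma_le_card [Fintype V] {M : Finset V} (hM : IsIndepDominatingIn G univ M) :
    igamma G ≤ M.card :=
  Nat.sInf_le fun _ _ => ⟨M, le_rfl, fun a _ => hM.2.2 a (mem_univ a)⟩

end Independence

section MarkedNoncover

variable {V : Type*} [Fintype V] [DecidableEq V] (G : SimpleGraph V) [DecidableRel G.Adj]

/-- The Alexander dual, relative to the ground set `s`, of the independence complex of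
`G[s \ B]`: `NC G` is the case `s = univ`, `B = ∅`. -/
def markedNC (s B : Finset V) : Finset (Finset V) :=
  s.powerset.filter fun W => ¬ (IndepSet G (s \ W) ∧ Disjoint (s \ W) B)

variable {G}

theorem mem_markedNC {s B W : Finset V} :
    W ∈ markedNC G s B ↔ W ⊆ s ∧ ¬ (IndepSet G (s \ W) ∧ Disjoint (s \ W) B) := by
  rw [markedNC, mem_filter, mem_powerset]

theorem NC_eq_markedNC : NC G = markedNC G univ ∅ := by
  ext W
  simp [NC, mem_markedNC, compl_eq_univ_sdiff]

theorem link_markedNC {s B : Finset V} {u : V} (hu : u ∈ s) :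
    link (markedNC G s B) u = markedNC G (s.erase u) (B.erase u) := by
  ext F
  have hsdiff : s \ insert u F = s.erase u \ F := by rw [sdiff_insert, erase_sdiff_comm]
  have hdisj : Disjoint (s.erase u \ F) (B.erase u) ↔ Disjoint (s.erase u \ F) B := by
    rw [← disjoint_erase_comm, erase_eq_of_notMem (by simp)]
  rw [mem_link, mem_markedNC, mem_markedNC, insert_subset_iff, subset_erase, hsdiff, hdisj]
  tauto

theorem deletion_markedNC_of_mem {s B : Finset V} {b : V} (hbs : b ∈ s) (hbB : b ∈ B) :
    deletion (markedNC G s B) b = (s.erase b).powerset := by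
  ext W
  rw [deletion, mem_filter, mem_markedNC, mem_powerset, subset_erase]
  have : b ∉ W → ¬ Disjoint (s \ W) B := fun hbW =>
    not_disjoint_iff.2 ⟨b, mem_sdiff.2 ⟨hbs, hbW⟩, hbB⟩
  tauto

theorem deletion_markedNC_empty {s : Finset V} {u : V} (hu : u ∈ s) :
    deletion (markedNC G s ∅) u = markedNC G (s.erase u) ((s.erase u).filter (G.Adj u)) := by
  ext W
  rw [deletion, mem_filter, mem_markedNC, mem_markedNC, subset_erase]
  suffices key : u ∉ W → (IndepSet G (s \ W) ↔ IndepSet G (s.erase u \ W) ∧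
      Disjoint (s.erase u \ W) ((s.erase u).filter (G.Adj u))) by
    simp only [disjoint_empty_right, and_true]
    tauto
  intro huW
  have hsplit : s \ W = insert u (s.erase u \ W) := by
    rw [erase_sdiff_comm, insert_erase (mem_sdiff.2 ⟨hu, huW⟩)]
  have hnbr : Disjoint (s.erase u \ W) ((s.erase u).filter (G.Adj u)) ↔
      ∀ y ∈ s.erase u \ W, ¬ G.Adj u y := by
    simp only [disjoint_left, mem_filter]
    exact forall₂_congr fun y hy => by simp [(mem_sdiff.1 hy).1]
  rw [hsplit, indepSet_insert, hnbr]

theorem markedNC_empty_of_indepSet {s : Finset V} (hs : IndepSet G s) : markedNC G s ∅ = ∅ :=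
  filter_false_of_mem fun _ _ => not_not.2 ⟨hs.subset sdiff_subset, disjoint_empty_right _⟩

theorem markedNC_eq_powerset_sdiff {s B X : Finset V} (hXs : X ⊆ s)
    (hX : ∀ A ⊆ s, ¬ (IndepSet G A ∧ Disjoint A B) ↔ X ⊆ A) :
    markedNC G s B = (s \ X).powerset := by
  ext W
  rw [mem_markedNC, hX _ sdiff_subset, mem_powerset, subset_sdiff, subset_sdiff, disjoint_comm]
  tauto

end MarkedNoncover

section Induction

variable {V : Type*} [Fintype V] [DecidableEq V] {G : SimpleGraph V} [DecidableRel G.Adj]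

theorem collapsible_zero_markedNC_of_mem {s B : Finset V} {b : V} (hbs : b ∈ s) (hbB : b ∈ B)
    (hbound : ∀ M, IsIndepDominatingIn G (s \ B) M → s.card ≤ M.card + 1) :
    Collapsible 0 (markedNC G s B) := by
  obtain ⟨M, -, hM⟩ := exists_isIndepDominatingIn_superset (empty_subset (s \ B))
    (fun _ h => absurd h (notMem_empty _) : IndepSet G ∅)
  have hMs : M ⊆ s.erase b := hM.1.trans fun x hx =>
    mem_erase.2 ⟨fun h => (mem_sdiff.1 hx).2 (h ▸ hbB), (mem_sdiff.1 hx).1⟩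
  have hMeq : M = s.erase b := eq_of_subset_of_card_le hMs (by
    have := hbound M hM
    rw [card_erase_of_mem hbs]
    omega)
  rw [markedNC_eq_powerset_sdiff (singleton_subset_iff.2 hbs) fun A hA => ?_,
    sdiff_singleton_eq_erase]
  · exact collapsible_powerset 0 _
  rw [singleton_subset_iff]
  refine ⟨fun h => not_not.1 fun hbA => h ?_,
    fun hbA h => not_disjoint_iff.2 ⟨b, hbA, hbB⟩ h.2⟩
  have hAM : A ⊆ M := hMeq ▸ subset_erase.2 ⟨hA, hbA⟩
  exact ⟨hM.2.1.subset hAM, (subset_sdiff.1 (hAM.trans hM.1)).2⟩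

theorem collapsible_zero_markedNC_of_adj {s : Finset V} {x y : V} (hx : x ∈ s) (hy : y ∈ s)
    (hxy : G.Adj x y) (hbound : ∀ M, IsIndepDominatingIn G s M → s.card ≤ M.card + 1) :
    Collapsible 0 (markedNC G s ∅) := by
  rw [markedNC_eq_powerset_sdiff (insert_subset hx (singleton_subset_iff.2 hy)) fun A hA => ?_]
  · exact collapsible_powerset 0 _
  simp only [insert_subset_iff, singleton_subset_iff, disjoint_empty_right, and_true]
  refine ⟨fun h => ?_, fun ⟨hxA, hyA⟩ hA' => hA' x hxA y hyA hxy⟩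
  by_contra hxyA
  refine h ?_
  by_cases hxA : x ∈ A
  · exact (indepSet_erase_of_adj hx hy hxy hbound).subset
      (subset_erase.2 ⟨hA, fun hyA => hxyA ⟨hxA, hyA⟩⟩)
  · exact (indepSet_erase_of_adj hy hx hxy.symm hbound).subset (subset_erase.2 ⟨hA, hxA⟩)

theorem collapsible_zero_markedNC {s B : Finset V} (hBs : B ⊆ s)
    (hbound : ∀ M, IsIndepDominatingIn G (s \ B) M → s.card ≤ M.card + 1) :
    Collapsible 0 (markedNC G s B) := by
  obtain rfl | ⟨b, hb⟩ := B.eq_empty_or_nonempty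
  · rw [sdiff_empty] at hbound
    by_cases hs : IndepSet G s
    · rw [markedNC_empty_of_indepSet hs]
      exact .refl
    simp only [IndepSet, not_forall, not_not] at hs
    obtain ⟨x, hx, y, hy, hxy⟩ := hs
    exact collapsible_zero_markedNC_of_adj hx hy hxy hbound
  · exact collapsible_zero_markedNC_of_mem (hBs hb) hb hbound

theorem collapsible_markedNC
    (hpair : ∀ s : Finset V, ¬ IndepSet G s →
      ∃ v ∈ s, ∃ u ∈ s, G.Adj v u ∧ ∀ w ∈ s, G.Adj v w → w = u ∨ G.Adj u w)
    (s B : Finset V) (d : ℕ) (hBs : B ⊆ s)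
    (hbound : ∀ M, IsIndepDominatingIn G (s \ B) M → s.card ≤ M.card + d + 1) :
    Collapsible d (markedNC G s B) := by
  induction s using Finset.strongInduction generalizing B d with | H s ih => ?_
  obtain _ | d := d
  · exact collapsible_zero_markedNC hBs hbound
  obtain rfl | ⟨b, hb⟩ := B.eq_empty_or_nonempty
  · rw [sdiff_empty] at hbound
    by_cases hs : IndepSet G s
    · rw [markedNC_empty_of_indepSet hs]
      exact .refl
    obtain ⟨v, hv, u, hu, hvu, hdom⟩ := hpair s hs
    refine .of_link_of_deletion (u := u) ?_ ?_
    · rw [link_markedNC hu, erase_empty]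
      refine ih _ (erase_ssubset hu) ∅ d (empty_subset _) fun M hM => ?_
      have := hbound M ((sdiff_empty (s := s.erase u) ▸ hM).of_erase hv hvu hdom)
      rw [card_erase_of_mem hu]
      omega
    · rw [deletion_markedNC_empty hu]
      refine ih _ (erase_ssubset hu) _ (d + 1) (filter_subset _ _) fun M hM => ?_
      have huM : u ∉ M := fun h => notMem_erase u s (mem_sdiff.1 (hM.1 h)).1
      have := hbound _ (hM.insert hu)
      rw [card_insert_of_notMem huM] at this
      rw [card_erase_of_mem hu]
      omega
  · have hbs := hBs hb
    refine .of_link_of_deletion (u := b) ?_ ?_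
    · rw [link_markedNC hbs]
      have hground : s.erase b \ B.erase b = s \ B := by
        rw [← erase_sdiff_distrib, erase_eq_of_notMem fun h => (mem_sdiff.1 h).2 hb]
      refine ih _ (erase_ssubset hbs) _ d (erase_subset_erase b hBs) fun M hM => ?_
      have := hbound M (hground ▸ hM)
      rw [card_erase_of_mem hbs]
      omega
    · rw [deletion_markedNC_of_mem hbs hb]
      exact collapsible_powerset _ _

end Induction

namespace SimpleGraph.Walk

variable {V : Type*} {G : SimpleGraph V} {a b w : V}

theorem IsChordless.of_append_left {c : V} {p : G.Walk a b} {q : G.Walk b c}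
    (hpq : (p.append q).IsPath) (h : (p.append q).IsChordless) : p.IsChordless := by
  rw [isChordless_iff_forall_mem_edges] at h ⊢
  intro x y hx hy hxy
  have hmem := h ((mem_support_append_iff p q).2 (.inl hx))
    ((mem_support_append_iff p q).2 (.inl hy)) hxy
  rw [edges_append, List.mem_append] at hmem
  refine hmem.resolve_right fun hq => ?_
  have junction : ∀ z ∈ p.support, z ∈ q.support → z = b := fun z hzp hzq =>
    not_not.1 fun hzb => hpq.ne_of_mem_support_of_append hzb hzp hzq rfl
  obtain rfl := junction x hx (q.fst_mem_support_of_mem_edges hq)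
  obtain rfl := junction y hy (q.snd_mem_support_of_mem_edges hq)
  exact G.irrefl hxy

theorem IsChordless.take {p : G.Walk a b} (hp : p.IsPath) (hpc : p.IsChordless) (n : ℕ) :
    (p.take n).IsChordless := by
  rw [← p.append_take_drop_eq n] at hp hpc
  exact hpc.of_append_left hp

theorem IsChordless.cons {p : G.Walk a b} (hpc : p.IsChordless) (h : G.Adj w a)
    (hw : ∀ x ∈ p.support, G.Adj w x → x = a) : (Walk.cons h p).IsChordless := by
  have hw' : ∀ x ∈ p.support, G.Adj w x → s(w, x) ∈ (Walk.cons h p).edges :=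
    fun x hx hwx => by simp [hw x hx hwx]
  rw [isChordless_iff_forall_mem_edges]
  intro x y hx hy hxy
  rw [support_cons, List.mem_cons] at hx hy
  rcases hx with rfl | hx <;> rcases hy with rfl | hy
  · exact absurd hxy (G.irrefl)
  · exact hw' y hy hxy
  · rw [Sym2.eq_swap]; exact hw' x hx hxy.symm
  · exact List.mem_cons_of_mem _ (hpc.mem_edges hx hy hxy)

end SimpleGraph.Walk

section Chordal

open SimpleGraph Walk

variable {V : Type*} {G : SimpleGraph V} {a b w : V}

theorem IsChordal.not_isChordless (hG : IsChordal G) {c : G.Walk a a} (hc : c.IsCycle)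
    (hlen : 4 ≤ c.length) : ¬ c.IsChordless := fun h => by
  obtain ⟨x, hx, y, hy, hxy, hnot⟩ := hG a c hc hlen
  exact hnot (h.mem_edges hx hy hxy)

theorem IsChordal.exists_inner_adj (hG : IsChordal G) {q : G.Walk a b} (hq : q.IsPath)
    (hqc : q.IsChordless) (hlen : 2 ≤ q.length) (hw : w ∉ q.support) (hwa : G.Adj w a)
    (hbw : G.Adj b w) : ∃ x ∈ q.support, x ≠ a ∧ x ≠ b ∧ G.Adj w x := by
  have hab : a ≠ b := by
    rintro rfl
    have := length_eq_zero_iff.2 (isPath_iff_nil.1 hq)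
    omega
  let c := Walk.cons hwa (q.concat hbw)
  have hc : c.IsCycle := by
    refine (cons_isCycle_iff _ _).2 ⟨hq.concat hw hbw, fun h => ?_⟩
    rw [edges_concat, List.concat_eq_append, List.mem_append, List.mem_singleton, Sym2.eq_iff]
      at h
    rcases h with h | ⟨rfl, -⟩ | ⟨-, rfl⟩
    · exact hw (q.fst_mem_support_of_mem_edges h)
    · exact hw q.end_mem_support
    · exact hab rfl
  have hlen4 : 4 ≤ c.length := by simp [c]; omega
  by_contra! hno
  refine hG.not_isChordless hc hlen4 (isChordless_iff_forall_mem_edges.2 fun x y hx hy hxy => ?_)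
  have hw' : ∀ y ∈ q.support, G.Adj w y → s(w, y) ∈ c.edges := fun y hy hwy => by
    by_cases hya : y = a
    · simp [c, hya]
    by_cases hyb : y = b
    · simp [c, hyb, edges_concat, Sym2.eq_swap]
    exact absurd hwy (hno y hy hya hyb)
  have hsupp : ∀ z ∈ c.support, z = w ∨ z ∈ q.support := fun z hz => by
    simp only [c, support_cons, support_concat, List.mem_cons, List.mem_append] at hz
    tauto
  rcases hsupp x hx with rfl | hxq <;> rcases hsupp y hy with rfl | hyq
  · exact absurd hxy (G.irrefl)
  · exact hw' y hyq hxy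
  · rw [Sym2.eq_swap]; exact hw' x hxq hxy.symm
  · simp only [c, edges_cons, edges_concat, List.concat_eq_append, List.mem_cons,
      List.mem_append]
    exact .inr (.inl (hqc.mem_edges hxq hyq hxy))

theorem IsChordal.eq_of_adj_of_not_adj_snd (hG : IsChordal G) {p : G.Walk a b} (hp : p.IsPath)
    (hpc : p.IsChordless) (hw : w ∉ p.support) (hwa : G.Adj w a) (hws : ¬ G.Adj w p.snd) :
    ∀ x ∈ p.support, G.Adj w x → x = a := by
  classical
  by_contra! hx
  have hex : ∃ n, 0 < n ∧ n ≤ p.length ∧ G.Adj w (p.getVert n) := by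
    obtain ⟨x, hx, hwx, hxa⟩ := hx
    obtain ⟨n, rfl, hn⟩ := mem_support_iff_exists_getVert.1 hx
    refine ⟨n, Nat.pos_of_ne_zero fun h => hxa ?_, hn, hwx⟩
    rw [h, getVert_zero]
  -- the first neighbour of `w` after `a` closes a cycle with the initial segment of `p`
  obtain ⟨hj0, hjlen, hwj⟩ := Nat.find_spec hex
  set j := Nat.find hex
  have hj1 : j ≠ 1 := fun h => hws (by rwa [h] at hwj)
  obtain ⟨y, hy, hya, hyj, hwy⟩ := hG.exists_inner_adj (hp.take j) (hpc.take hp j)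
    (by rw [take_length]; omega) (fun h => hw (List.mem_of_mem_take (support_take p j ▸ h)))
    hwa hwj.symm
  obtain ⟨i, rfl, hi⟩ := mem_support_iff_exists_getVert.1 hy
  rw [take_length] at hi
  rw [take_getVert, min_eq_right (by omega)] at hya hyj hwy
  have hi0 : i ≠ 0 := fun h => hya (by rw [h, getVert_zero])
  have hij : i ≠ j := fun h => hyj (by rw [h])
  exact Nat.find_min hex (show i < j by omega) ⟨by omega, by omega, hwy⟩

theorem IsChordal.exists_adj_forall_adj [Fintype V] (hG : IsChordal G) {s : Finset V}
    (hs : ¬ IndepSet G s) :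
    ∃ v ∈ s, ∃ u ∈ s, G.Adj v u ∧ ∀ w ∈ s, G.Adj v w → w = u ∨ G.Adj u w := by
  classical
  -- take `v`, `u` to be the first two vertices of a longest chordless path in `s`
  let P : ℕ → Prop := fun k => ∃ (a b : V) (p : G.Walk a b),
    p.IsPath ∧ p.IsChordless ∧ (∀ x ∈ p.support, x ∈ s) ∧ p.length = k
  have hbound : ∀ k, P k → k ≤ Fintype.card V := fun k ⟨_, _, _, hp, _, _, hk⟩ =>
    hk ▸ hp.length_lt.le
  have hP1 : P 1 := by
    simp only [IndepSet, not_forall, not_not] at hs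
    obtain ⟨x, hx, y, hy, hxy⟩ := hs
    exact ⟨x, y, hxy.toWalk, hxy.isPath_toWalk, hxy.isChordless_toWalk, by simp [hx, hy], rfl⟩
  have hmax : ∀ k, P k → k ≤ Nat.findGreatest P (Fintype.card V) := fun k hk =>
    Nat.le_findGreatest (hbound k hk) hk
  obtain ⟨a, b, p, hp, hpc, hps, hlen⟩ := Nat.findGreatest_spec (hbound 1 hP1) hP1
  have hpnil : ¬ p.Nil := fun h => by
    have := hmax 1 hP1
    rw [← hlen, length_eq_zero_iff.2 h] at this
    omega
  refine ⟨a, hps a p.start_mem_support, p.snd, hps _ (p.getVert_mem_support 1), p.adj_snd hpnil,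
    fun w hws haw => ?_⟩
  by_contra! hne
  have hwp : w ∉ p.support := fun hw =>
    hne.1 (hp.eq_snd_of_mem_edges (hpc.mem_edges p.start_mem_support hw haw))
  have hnbr := hG.eq_of_adj_of_not_adj_snd hp hpc hwp haw.symm fun h => hne.2 h.symm
  have hlonger : P (p.length + 1) := ⟨w, b, Walk.cons haw.symm p, hp.cons hwp,
    hpc.cons haw.symm hnbr, by simpa [hws] using hps, rfl⟩
  have := hmax _ hlonger
  omega

end Chordal

theorem noncover_collapsible_igamma (G : SimpleGraph V) [DecidableRel G.Adj]
    (hG : IsChordal G) :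
    Collapsible (Fintype.card V - igamma G - 1) (NC G) := by
  rw [NC_eq_markedNC]
  refine collapsible_markedNC (fun s hs => hG.exists_adj_forall_adj hs) univ ∅ _
    (empty_subset _) fun M hM => ?_
  have := igamma_le_card (sdiff_empty (s := (univ : Finset V)) ▸ hM)
  rw [card_univ]
  omega
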